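/- Let H be a Hopf k-algebra and (M, Δ_M) a right H-comodule, and let V be any k-vector space. Equip Hom_k(H,V) with the free contra-action θ_free(Φ)(h) = Φ(h₍₂₎)(h₍₁₎), equip Hom_k(M, Hom_k(H,V)) with the diagonal contra-action θ_diag(Φ)(m) = θ_free(h ↦ Φ(m₍₁₎h)(m₍₀₎)), and equip Hom_k(H, Hom_k(M,V)) with the free contra-action on the vector space Hom_k(M,V). Then the map α : Hom_k(M, Hom_k(H,V)) → Hom_k(H, Hom_k(M,V)) defined by α(φ)(h)(m) = φ(m₍₀₎)(S(m₍₁₎)h) is an isomorphism of left H-contramodules, with inverse β given by β(ψ)(m)(h) = ψ(m₍₁₎h)(m₍₀₎). -/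

import Mathlib

/-!
STATEMENT 9: For a Hopf algebra H, a right H-comodule M and a vector space V, the map
α : Hom_k(M, Hom_k(H,V)) → Hom_k(H, Hom_k(M,V)), α(φ)(h)(m) = φ(m₍₀₎)(S(m₍₁₎)h), is an
isomorphism of left H-contramodules from the diagonal contramodule Hom_k(M, Hom_k(H,V))
(diagonal action over the free contramodule Hom_k(H,V)) to the free contramodule
Hom_k(H, Hom_k(M,V)), with inverse β(ψ)(m)(h) = ψ(m₍₁₎h)(m₍₀₎).
-/

open TensorProduct LinearMap

noncomputable section

variable (k : Type*) [Field k]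
variable (H : Type*) [Semiring H] [HopfAlgebra k H]

def IsComodule {M : Type*} [AddCommGroup M] [Module k M]
    (ρ : M →ₗ[k] M ⊗[k] H) : Prop :=
  ((TensorProduct.assoc k M H H).toLinearMap ∘ₗ (TensorProduct.map ρ LinearMap.id) ∘ₗ ρ
      = (TensorProduct.map LinearMap.id Coalgebra.comul) ∘ₗ ρ) ∧
  ((TensorProduct.rid k M).toLinearMap ∘ₗ
      (TensorProduct.map LinearMap.id Coalgebra.counit) ∘ₗ ρ = LinearMap.id)

def IsContraHom {B D' : Type*} [AddCommGroup B] [Module k B] [AddCommGroup D'] [Module k D']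
    (θB : (H →ₗ[k] B) →ₗ[k] B) (θD : (H →ₗ[k] D') →ₗ[k] D')
    (f : B →ₗ[k] D') : Prop :=
  ∀ φ : H →ₗ[k] B, f (θB φ) = θD (f ∘ₗ φ)

/-- The free contra-action on `Hom_k(H,V)`: `θ_free(Φ)(h) = Φ(h₍₂₎)(h₍₁₎)`. -/
def freeContra (V : Type*) [AddCommGroup V] [Module k V] :
    (H →ₗ[k] (H →ₗ[k] V)) →ₗ[k] (H →ₗ[k] V) :=
  (LinearMap.lcomp k V (Coalgebra.comul (R := k) (A := H))) ∘ₗ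
    (TensorProduct.uncurry (RingHom.id k) H H V) ∘ₗ (LinearMap.lflip).toLinearMap

/-- The diagonal contra-action on `Hom_k(M,B)`:
`θ_diag(Φ)(m) = θ_B(h ↦ Φ(m₍₁₎h)(m₍₀₎))`. -/
def diagContra {M : Type*} [AddCommGroup M] [Module k M]
    {B : Type*} [AddCommGroup B] [Module k B]
    (ρ : M →ₗ[k] M ⊗[k] H) (θB : (H →ₗ[k] B) →ₗ[k] B) :
    (H →ₗ[k] (M →ₗ[k] B)) →ₗ[k] (M →ₗ[k] B) :=
  (LinearMap.llcomp k M (H →ₗ[k] B) B θB) ∘ₗ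
  (LinearMap.lcomp k (H →ₗ[k] B) ρ) ∘ₗ
  (TensorProduct.uncurry (RingHom.id k) M H (H →ₗ[k] B)) ∘ₗ
  (LinearMap.lflip).toLinearMap ∘ₗ
  (LinearMap.llcomp k H (H →ₗ[k] (M →ₗ[k] B)) (M →ₗ[k] (H →ₗ[k] B)) LinearMap.lflip.toLinearMap) ∘ₗ
  (TensorProduct.lcurry (RingHom.id k) H H (M →ₗ[k] B)) ∘ₗ
  (LinearMap.lcomp k (M →ₗ[k] B) (LinearMap.mul' k H))

/-- `m ⊗ h ↦ m₍₀₎ ⊗ S(m₍₁₎)h`. -/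
def twistS {M : Type*} [AddCommGroup M] [Module k M]
    (ρ : M →ₗ[k] M ⊗[k] H) : (M ⊗[k] H) →ₗ[k] (M ⊗[k] H) :=
  (TensorProduct.map LinearMap.id
      ((LinearMap.mul' k H) ∘ₗ
        (TensorProduct.map (HopfAlgebra.antipode (R := k)) LinearMap.id))) ∘ₗ
    (TensorProduct.assoc k M H H).toLinearMap ∘ₗ (TensorProduct.map ρ LinearMap.id)

/-- `m ⊗ h ↦ m₍₀₎ ⊗ m₍₁₎h`. -/
def twist {M : Type*} [AddCommGroup M] [Module k M]
    (ρ : M →ₗ[k] M ⊗[k] H) : (M ⊗[k] H) →ₗ[k] (M ⊗[k] H) :=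
  (TensorProduct.map LinearMap.id (LinearMap.mul' k H)) ∘ₗ
    (TensorProduct.assoc k M H H).toLinearMap ∘ₗ (TensorProduct.map ρ LinearMap.id)

/-- `α(φ)(h)(m) = φ(m₍₀₎)(S(m₍₁₎)h)`. -/
def alphaMap {M : Type*} [AddCommGroup M] [Module k M]
    (V : Type*) [AddCommGroup V] [Module k V] (ρ : M →ₗ[k] M ⊗[k] H) :
    (M →ₗ[k] (H →ₗ[k] V)) →ₗ[k] (H →ₗ[k] (M →ₗ[k] V)) :=
  (LinearMap.lflip).toLinearMap ∘ₗ (TensorProduct.lcurry (RingHom.id k) M H V) ∘ₗ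
    (LinearMap.lcomp k V (twistS k H ρ)) ∘ₗ (TensorProduct.uncurry (RingHom.id k) M H V)

/-- `β(ψ)(m)(h) = ψ(m₍₁₎h)(m₍₀₎)`. -/
def betaMap {M : Type*} [AddCommGroup M] [Module k M]
    (V : Type*) [AddCommGroup V] [Module k V] (ρ : M →ₗ[k] M ⊗[k] H) :
    (H →ₗ[k] (M →ₗ[k] V)) →ₗ[k] (M →ₗ[k] (H →ₗ[k] V)) :=
  (TensorProduct.lcurry (RingHom.id k) M H V) ∘ₗ (LinearMap.lcomp k V (twist k H ρ)) ∘ₗ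
    (TensorProduct.uncurry (RingHom.id k) M H V) ∘ₗ (LinearMap.lflip).toLinearMap

/-!
Under the currying isomorphisms `Hom(M, Hom(H,V)) ≅ Hom(M ⊗ H, V) ≅ Hom(H, Hom(M,V))`, `α` and
`β` become precomposition with the twists `m ⊗ h ↦ m₍₀₎ ⊗ S(m₍₁₎)h` and `m ⊗ h ↦ m₍₀₎ ⊗ m₍₁₎h`.
By coassociativity and counitality of the coaction, `g ↦ (m ⊗ a ↦ m₍₀₎ ⊗ g(m₍₁₎)a)` is
multiplicative from the convolution algebra `Hom(H, A)` to `End(M ⊗ A)`, so `S * id = id * S = 1`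
makes the two twists mutually inverse.

That `β` is a contramodule map is a Sweedler computation: both `β(θ_free ψ)(m)(h)` and
`θ_diag(β ∘ ψ)(m)(h)` evaluate `ψ` on `m₍₀₎ ⊗ Δ(m₍₁₎)Δ(h)`, the first because `Δ` is
multiplicative, the second by coassociativity of the coaction. Its inverse `α` is then a
contramodule map as well.
-/

open WithConv

section CoactionTwist

variable {k H} {M : Type*} [AddCommGroup M] [Module k M] {ρ : M →ₗ[k] M ⊗[k] H}

theorem IsComodule.coassoc (hM : IsComodule k H ρ) (m : M) :
    TensorProduct.assoc k M H H (rTensor H ρ (ρ m)) = lTensor M Coalgebra.comul (ρ m) :=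
  LinearMap.congr_fun hM.1 m

theorem IsComodule.lTensor_counit (hM : IsComodule k H ρ) (m : M) :
    lTensor M Coalgebra.counit (ρ m) = m ⊗ₜ[k] (1 : k) :=
  (TensorProduct.rid k M).injective (by simpa [lTensor] using LinearMap.congr_fun hM.2 m)

variable (ρ) {A : Type*} [Semiring A] [Algebra k A]

/-- `m ⊗ a ↦ m₍₀₎ ⊗ g(m₍₁₎) a`. -/
def coactionTwist (g : WithConv (H →ₗ[k] A)) : M ⊗[k] A →ₗ[k] M ⊗[k] A :=
  map LinearMap.id (mul' k A ∘ₗ map g.ofConv LinearMap.id) ∘ₗ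
    (TensorProduct.assoc k M H A).toLinearMap ∘ₗ map ρ LinearMap.id

theorem coactionTwist_tmul (g : WithConv (H →ₗ[k] A)) (m : M) (a : A) :
    coactionTwist ρ g (m ⊗ₜ a) = lTensor M (mulRight k a ∘ₗ g.ofConv) (ρ m) := by
  simp only [coactionTwist, comp_apply, map_tmul, id_apply, LinearEquiv.coe_coe]
  induction ρ m using TensorProduct.induction_on with
  | zero => simp
  | tmul m' x => simp
  | add s t hs ht => simp only [add_tmul, map_add, hs, ht]

theorem coactionTwist_comp_lTensor (g : WithConv (H →ₗ[k] A)) (f : H →ₗ[k] A) :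
    coactionTwist ρ g ∘ₗ lTensor M f =
      lTensor M (mul' k A ∘ₗ map g.ofConv f) ∘ₗ
        (TensorProduct.assoc k M H H).toLinearMap ∘ₗ rTensor H ρ := by
  refine TensorProduct.ext' fun m x => ?_
  simp only [comp_apply, lTensor_tmul, rTensor_tmul, LinearEquiv.coe_coe, coactionTwist_tmul]
  induction ρ m using TensorProduct.induction_on with
  | zero => simp
  | tmul m' y => simp
  | add s t hs ht => simp only [add_tmul, map_add, hs, ht]

theorem coactionTwist_mul (hM : IsComodule k H ρ) (f g : WithConv (H →ₗ[k] A)) :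
    coactionTwist ρ (f * g) = coactionTwist ρ f ∘ₗ coactionTwist ρ g := by
  refine TensorProduct.ext' fun m a => ?_
  have hmul : mul' k A ∘ₗ map f.ofConv (mulRight k a ∘ₗ g.ofConv) =
      mulRight k a ∘ₗ mul' k A ∘ₗ map f.ofConv g.ofConv := by
    ext x y; simp [mul_assoc]
  rw [comp_apply, coactionTwist_tmul, coactionTwist_tmul, ← comp_apply (coactionTwist ρ f),
    coactionTwist_comp_lTensor, comp_apply, comp_apply, LinearEquiv.coe_coe, hM.coassoc,
    ← lTensor_comp_apply, hmul, LinearMap.convMul_def]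
  rfl

theorem coactionTwist_one (hM : IsComodule k H ρ) :
    coactionTwist ρ (1 : WithConv (H →ₗ[k] A)) = LinearMap.id := by
  refine TensorProduct.ext' fun m a => ?_
  rw [coactionTwist_tmul, LinearMap.convOne_def, ofConv_toConv, ← comp_assoc, lTensor_comp_apply,
    hM.lTensor_counit]
  simp

end CoactionTwist

section Inverse

variable {k H} {M : Type*} [AddCommGroup M] [Module k M] {ρ : M →ₗ[k] M ⊗[k] H}
variable {V : Type*} [AddCommGroup V] [Module k V]

theorem twistS_eq_coactionTwist :
    twistS k H ρ = coactionTwist ρ (toConv (HopfAlgebra.antipode k)) := rfl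

theorem twist_eq_coactionTwist :
    twist k H ρ = coactionTwist ρ (toConv LinearMap.id) := by
  simp [twist, coactionTwist, map_id]

theorem twist_tmul (m : M) (h : H) :
    twist k H ρ (m ⊗ₜ h) = lTensor M (mulRight k h) (ρ m) := by
  rw [twist_eq_coactionTwist, coactionTwist_tmul, ofConv_toConv, comp_id]

theorem twistS_comp_twist (hM : IsComodule k H ρ) :
    twistS k H ρ ∘ₗ twist k H ρ = LinearMap.id := by
  rw [twistS_eq_coactionTwist, twist_eq_coactionTwist, ← coactionTwist_mul ρ hM,
    LinearMap.antipode_mul_id, coactionTwist_one ρ hM]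

theorem twist_comp_twistS (hM : IsComodule k H ρ) :
    twist k H ρ ∘ₗ twistS k H ρ = LinearMap.id := by
  rw [twistS_eq_coactionTwist, twist_eq_coactionTwist, ← coactionTwist_mul ρ hM,
    LinearMap.id_mul_antipode, coactionTwist_one ρ hM]

theorem lift_flip_alphaMap (φ : M →ₗ[k] H →ₗ[k] V) :
    lift (alphaMap k H V ρ φ).flip = lift φ ∘ₗ twistS k H ρ :=
  TensorProduct.ext' fun _ _ => rfl

theorem lift_betaMap (ψ : H →ₗ[k] M →ₗ[k] V) :
    lift (betaMap k H V ρ ψ) = lift ψ.flip ∘ₗ twist k H ρ :=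
  TensorProduct.ext' fun _ _ => rfl

theorem betaMap_comp_alphaMap (hM : IsComodule k H ρ) :
    betaMap k H V ρ ∘ₗ alphaMap k H V ρ = LinearMap.id := by
  ext φ : 1
  apply (lift.equiv (RingHom.id k) M H V).injective
  change lift (betaMap k H V ρ (alphaMap k H V ρ φ)) = lift φ
  rw [lift_betaMap, lift_flip_alphaMap, comp_assoc, twistS_comp_twist hM, comp_id]

theorem alphaMap_comp_betaMap (hM : IsComodule k H ρ) :
    alphaMap k H V ρ ∘ₗ betaMap k H V ρ = LinearMap.id := by
  ext ψ : 1
  apply (lift.equiv (RingHom.id k) M H V).injective.comp (lflip (R₀ := k)).injective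
  change lift (alphaMap k H V ρ (betaMap k H V ρ ψ)).flip = lift ψ.flip
  rw [lift_flip_alphaMap, lift_betaMap, comp_assoc, twist_comp_twistS hM, comp_id]

end Inverse

section ContraHom

variable {k H}

theorem IsContraHom.inverse {B D : Type*} [AddCommGroup B] [Module k B] [AddCommGroup D]
    [Module k D] {θB : (H →ₗ[k] B) →ₗ[k] B} {θD : (H →ₗ[k] D) →ₗ[k] D} {f : B →ₗ[k] D}
    {g : D →ₗ[k] B} (hf : IsContraHom k H θB θD f) (hfg : f ∘ₗ g = LinearMap.id)
    (hgf : g ∘ₗ f = LinearMap.id) : IsContraHom k H θD θB g := fun φ =>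
  calc g (θD φ) = g (θD (f ∘ₗ g ∘ₗ φ)) := by rw [← comp_assoc, hfg, id_comp]
    _ = g (f (θB (g ∘ₗ φ))) := by rw [hf]
    _ = θB (g ∘ₗ φ) := by rw [← comp_apply g f, hgf, id_apply]

variable {M : Type*} [AddCommGroup M] [Module k M] {ρ : M →ₗ[k] M ⊗[k] H}
variable {V : Type*} [AddCommGroup V] [Module k V]

theorem freeContra_apply {W : Type*} [AddCommGroup W] [Module k W] (Ψ : H →ₗ[k] H →ₗ[k] W)
    (h : H) : freeContra k H W Ψ h = lift Ψ.flip (Coalgebra.comul h) := rfl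

theorem betaMap_apply (ψ : H →ₗ[k] M →ₗ[k] V) (m : M) (h : H) :
    betaMap k H V ρ ψ m h = lift ψ.flip (lTensor M (mulRight k h) (ρ m)) := by
  rw [← twist_tmul]
  rfl

theorem betaMap_freeContra_apply (ψ : H →ₗ[k] H →ₗ[k] M →ₗ[k] V)
    (m : M) (h : H) :
    betaMap k H V ρ (freeContra k H (M →ₗ[k] V) ψ) m h =
      lift (lift ψ.flip).flip
        (lTensor M (mulRight k (Coalgebra.comul h)) (lTensor M Coalgebra.comul (ρ m))) := by
  rw [betaMap_apply, ← lTensor_comp_apply, ← comp_apply (lift _),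
    ← comp_apply (lift (lift ψ.flip).flip)]
  congr 1
  refine TensorProduct.ext' fun m' x => ?_
  simp [freeContra_apply, Bialgebra.comul_mul]

theorem diagContra_betaMap_apply (ψ : H →ₗ[k] H →ₗ[k] M →ₗ[k] V)
    (m : M) (h : H) :
    diagContra k H ρ (freeContra k H V) (betaMap k H V ρ ∘ₗ ψ) m h =
      lift (lift ψ.flip).flip (lTensor M (mulRight k (Coalgebra.comul h))
        (TensorProduct.assoc k M H H (rTensor H ρ (ρ m)))) := by
  simp only [diagContra, comp_apply, LinearEquiv.coe_coe, llcomp_apply, lcomp_apply,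
    freeContra_apply]
  induction Coalgebra.comul (R := k) h using TensorProduct.induction_on with
  | zero => simp
  | add c c' hc hc' =>
    have hadd : mulRight k (c + c') = mulRight k c + mulRight k c' := ext fun _ => mul_add _ _ _
    rw [map_add, hc, hc', hadd, lTensor_add, LinearMap.add_apply, map_add]
  | tmul a b =>
    induction ρ m using TensorProduct.induction_on with
    | zero => simp
    | add t t' ht ht' =>
      rw [map_add (rTensor H ρ), map_add (TensorProduct.assoc k M H H), map_add (lTensor M _),
        map_add (lift _), ← ht, ← ht']
      simp
    | tmul m' x =>
      simp only [lflip_apply, uncurry_apply, flip_apply, llcomp_apply, LinearEquiv.coe_coe,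
        lift.tmul, lcurry_apply, lcomp_apply, mul'_apply, coe_comp, Function.comp_apply,
        rTensor_tmul, betaMap_apply]
      induction ρ m' using TensorProduct.induction_on with
      | zero => simp
      | add s s' hs hs' => simp [add_tmul, hs, hs']
      | tmul m'' y => simp

theorem betaMap_isContraHom (hM : IsComodule k H ρ) :
    IsContraHom k H (freeContra k H (M →ₗ[k] V)) (diagContra k H ρ (freeContra k H V))
      (betaMap k H V ρ) := fun ψ => by
  ext m h
  rw [betaMap_freeContra_apply, diagContra_betaMap_apply, hM.coassoc]

end ContraHom

/-- The hom identity (free case): `Hom_k(M, Hom_k(H,V)) ≅ Hom_k(H, Hom_k(M,V))`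
as `H`-contramodules, via `α`, with inverse `β`. -/
theorem alphaMap_contraIso
    (M : Type*) [AddCommGroup M] [Module k M]
    (ρ : M →ₗ[k] M ⊗[k] H) (hM : IsComodule k H ρ)
    (V : Type*) [AddCommGroup V] [Module k V] :
    IsContraHom k H (diagContra k H ρ (freeContra k H V)) (freeContra k H (M →ₗ[k] V))
      (alphaMap k H V ρ) ∧
    (betaMap k H V ρ) ∘ₗ (alphaMap k H V ρ) = LinearMap.id ∧
    (alphaMap k H V ρ) ∘ₗ (betaMap k H V ρ) = LinearMap.id :=
  ⟨(betaMap_isContraHom hM).inverse (betaMap_comp_alphaMap hM) (alphaMap_comp_betaMap hM),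
    betaMap_comp_alphaMap hM, alphaMap_comp_betaMap hM⟩

end
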